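/- arXiv:2009.11348 — 7 statements merged into one kernel-verified Lean document; each statement's English description precedes it below -/
import Mathlib

section
/- Let p̄, p̃, p ∈ [0,1], n ∈ ℕ with n > 1, and L > 0. Suppose |p - p̄| ≤ 2√(p̄·L/(2(n-1))) + 7L/(3(n-1)) and |p̃ - p̄| ≤ 2√(p̄·L/(2(n-1))) + 7L/(3(n-1)). Then √p̄ ≤ √p + (1/√2 + √(17/6))·√(L/(n-1)). -/
lemma sqrt_add_le_aux (x y : ℝ) (hx : 0 ≤ x) (hy : 0 ≤ y) :
    Real.sqrt (x + y) ≤ Real.sqrt x + Real.sqrt y := by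
  have h : x + y ≤ (Real.sqrt x + Real.sqrt y) ^ 2 := by
    nlinarith [Real.sq_sqrt hx, Real.sq_sqrt hy, Real.sqrt_nonneg x, Real.sqrt_nonneg y]
  calc Real.sqrt (x + y) ≤ Real.sqrt ((Real.sqrt x + Real.sqrt y) ^ 2) := Real.sqrt_le_sqrt h
    _ = |Real.sqrt x + Real.sqrt y| := Real.sqrt_sq_eq_abs _
    _ = _ := abs_of_nonneg (by positivity)

theorem sqrt_empirical_le (pbar ptil p L : ℝ) (n : ℕ)
    (hpbar0 : 0 ≤ pbar) (hpbar1 : pbar ≤ 1) (hptil0 : 0 ≤ ptil) (hptil1 : ptil ≤ 1)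
    (hp0 : 0 ≤ p) (hp1 : p ≤ 1) (hn : 1 < n) (hL : 0 < L)
    (h1 : |p - pbar| ≤ 2 * Real.sqrt (pbar * L / (2 * (n - 1 : ℝ))) + 7 * L / (3 * (n - 1 : ℝ)))
    (h2 : |ptil - pbar| ≤ 2 * Real.sqrt (pbar * L / (2 * (n - 1 : ℝ))) + 7 * L / (3 * (n - 1 : ℝ))) :
    Real.sqrt pbar ≤ Real.sqrt p
      + (1 / Real.sqrt 2 + Real.sqrt (17 / 6)) * Real.sqrt (L / (n - 1 : ℝ)) := by
  set m : ℝ := (n : ℝ) - 1 with hmdef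
  have hm : 0 < m := by
    have : (1 : ℝ) < (n : ℝ) := by exact_mod_cast hn
    simp only [hmdef]; linarith
  set a : ℝ := Real.sqrt (L / (2 * m)) with hadef
  set b : ℝ := Real.sqrt pbar with hbdef
  have hb0 : 0 ≤ b := Real.sqrt_nonneg _
  have ha0 : 0 ≤ a := Real.sqrt_nonneg _
  have hbsq : b ^ 2 = pbar := Real.sq_sqrt hpbar0
  have hasq : a ^ 2 = L / (2 * m) := Real.sq_sqrt (by positivity)
  have hsplit : Real.sqrt (pbar * L / (2 * m)) = b * a := by
    rw [hbdef, hadef, ← Real.sqrt_mul hpbar0]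
    ring_nf
  have key : pbar ≤ p + 2 * (b * a) + 7 * L / (3 * m) := by
    have := neg_abs_le (p - pbar)
    rw [hsplit] at h1
    linarith
  have hq : (b - a) ^ 2 ≤ p + 17 / 6 * (L / m) := by
    have hsum : 7 * L / (3 * m) + L / (2 * m) = 17 / 6 * (L / m) := by
      field_simp; ring
    nlinarith [hbsq, hasq]
  have hba : b - a ≤ Real.sqrt (p + 17 / 6 * (L / m)) := by
    calc b - a ≤ |b - a| := le_abs_self _
      _ = Real.sqrt ((b - a) ^ 2) := (Real.sqrt_sq_eq_abs _).symm
      _ ≤ _ := Real.sqrt_le_sqrt hq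
  have hsub : Real.sqrt (p + 17 / 6 * (L / m)) ≤
      Real.sqrt p + Real.sqrt (17 / 6) * Real.sqrt (L / m) := by
    have := sqrt_add_le_aux p (17 / 6 * (L / m)) hp0 (by positivity)
    rwa [Real.sqrt_mul (by norm_num : (0:ℝ) ≤ 17/6)] at this
  have haval : a = 1 / Real.sqrt 2 * Real.sqrt (L / m) := by
    rw [hadef]
    rw [show L / (2 * m) = (2:ℝ)⁻¹ * (L / m) by field_simp]
    rw [Real.sqrt_mul (by norm_num : (0:ℝ) ≤ 2⁻¹), Real.sqrt_inv]
    rw [one_div]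
  have : b ≤ a + (Real.sqrt p + Real.sqrt (17 / 6) * Real.sqrt (L / m)) := by linarith
  rw [haval] at this
  linarith
end

section
/- Let p̄, p̃, p ∈ [0,1], n ∈ ℕ with n > 1, and L > 0 (playing the role of ln(4/δ), assumed L ≥ 1). Suppose both p and p̃ satisfy |q - p̄| ≤ √(2p̄(1-p̄)L/n) + 7L/(3(n-1)) for q ∈ {p, p̃}. Then |p̃ - p| ≤ 2√2·√(p̃·L/(n-1)) + 5·(L/(n-1))^{3/4} + 21·L/(n-1). -/
set_option maxHeartbeats 1000000


theorem confidence_interval_diff (pbar ptil p L : ℝ) (n : ℕ)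
    (hpbar0 : 0 ≤ pbar) (hpbar1 : pbar ≤ 1) (hptil0 : 0 ≤ ptil) (hptil1 : ptil ≤ 1)
    (hp0 : 0 ≤ p) (hp1 : p ≤ 1) (hn : 1 < n) (hL : 1 ≤ L)
    (h1 : |p - pbar| ≤ Real.sqrt (2 * pbar * (1 - pbar) * L / n) + 7 * L / (3 * (n - 1 : ℝ)))
    (h2 : |ptil - pbar| ≤ Real.sqrt (2 * pbar * (1 - pbar) * L / n) + 7 * L / (3 * (n - 1 : ℝ))) :
    |ptil - p| ≤ 2 * Real.sqrt 2 * Real.sqrt (ptil * L / (n - 1 : ℝ))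
      + 5 * (L / (n - 1 : ℝ)) ^ ((3 : ℝ) / 4) + 21 * L / (n - 1 : ℝ) := by
  have hn2 : (2:ℝ) ≤ (n:ℝ) := by exact_mod_cast hn
  set m : ℝ := (n:ℝ) - 1 with hm
  have hm1 : (1:ℝ) ≤ m := by simp [hm]; linarith
  have hm0 : (0:ℝ) < m := by linarith
  have hL0 : (0:ℝ) < L := by linarith
  set r : ℝ := L / m with hr
  have hr0 : (0:ℝ) < r := div_pos hL0 hm0
  set S : ℝ := Real.sqrt (2 * pbar * (1 - pbar) * L / n) with hS
  have hS0 : 0 ≤ S := Real.sqrt_nonneg _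
  have hA0 : 0 ≤ 2 * pbar * (1 - pbar) * L / n := by
    have : (0:ℝ) ≤ 1 - pbar := by linarith
    positivity
  have hSsq : S ^ 2 = 2 * pbar * (1 - pbar) * L / n := Real.sq_sqrt hA0
  have hLn : L / n ≤ r := by
    rw [hr]
    apply div_le_div_of_nonneg_left hL0.le hm0
    linarith
  have h73 : 7 * L / (3 * m) = 7 * r / 3 := by rw [hr]; field_simp
  rw [h73] at h1 h2
  have habs2 := abs_le.mp h2
  have habs1 := abs_le.mp h1
  have hpbarle : pbar ≤ ptil + S + 7 * r / 3 := by linarith [habs2.1]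
  have hAle : S ^ 2 ≤ 2 * r * pbar := by
    rw [hSsq]
    have heq : 2 * pbar * (1 - pbar) * L / n = (2 * pbar * (1 - pbar)) * (L / n) := by ring
    rw [heq]
    have hLn0 : (0:ℝ) ≤ L / n := by positivity
    nlinarith [mul_nonneg hpbar0 (sub_nonneg.mpr hLn), mul_nonneg (mul_nonneg hpbar0 hpbar0) hLn0]
  have hkey : (S - r) ^ 2 ≤ 2 * r * ptil + 17 * r ^ 2 / 3 := by nlinarith [hAle, hpbarle, hr0]
  have hSle : S - r ≤ Real.sqrt (2 * r * ptil + 17 * r ^ 2 / 3) := by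
    calc S - r ≤ |S - r| := le_abs_self _
      _ = Real.sqrt ((S - r) ^ 2) := (Real.sqrt_sq_eq_abs _).symm
      _ ≤ _ := Real.sqrt_le_sqrt hkey
  have hsplit : Real.sqrt (2 * r * ptil + 17 * r ^ 2 / 3)
      ≤ Real.sqrt (2 * r * ptil) + Real.sqrt (17 * r ^ 2 / 3) := by
    have h1' : (0:ℝ) ≤ 2 * r * ptil := by positivity
    have h2' : (0:ℝ) ≤ 17 * r ^ 2 / 3 := by positivity
    have := Real.sq_sqrt h1'
    have := Real.sq_sqrt h2'
    have hsum : 2 * r * ptil + 17 * r ^ 2 / 3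
        ≤ (Real.sqrt (2 * r * ptil) + Real.sqrt (17 * r ^ 2 / 3)) ^ 2 := by
      nlinarith [Real.sqrt_nonneg (2 * r * ptil), Real.sqrt_nonneg (17 * r ^ 2 / 3)]
    calc Real.sqrt (2 * r * ptil + 17 * r ^ 2 / 3)
        ≤ Real.sqrt ((Real.sqrt (2 * r * ptil) + Real.sqrt (17 * r ^ 2 / 3)) ^ 2) :=
          Real.sqrt_le_sqrt hsum
      _ = _ := Real.sqrt_sq (by positivity)
  have h17 : Real.sqrt (17 * r ^ 2 / 3) ≤ 5 / 2 * r := by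
    calc Real.sqrt (17 * r ^ 2 / 3) ≤ Real.sqrt ((5 / 2 * r) ^ 2) :=
          Real.sqrt_le_sqrt (by nlinarith [hr0.le])
      _ = 5 / 2 * r := Real.sqrt_sq (by positivity)
  have hsq2 : Real.sqrt (2 * r * ptil) = Real.sqrt 2 * Real.sqrt (ptil * L / m) := by
    have : 2 * r * ptil = 2 * (ptil * L / m) := by rw [hr]; field_simp
    rw [this, Real.sqrt_mul (by norm_num)]
  have hStot : S ≤ Real.sqrt 2 * Real.sqrt (ptil * L / m) + 7 / 2 * r := by
    have := hSle.trans (hsplit.trans (by linarith [h17] :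
      Real.sqrt (2 * r * ptil) + Real.sqrt (17 * r ^ 2 / 3)
        ≤ Real.sqrt (2 * r * ptil) + 5 / 2 * r))
    rw [hsq2] at this
    linarith
  have htri : |ptil - p| ≤ 2 * S + 14 * r / 3 := by
    have := abs_sub_abs_le_abs_sub ptil p
    calc |ptil - p| ≤ |ptil - pbar| + |p - pbar| := by
          rw [show ptil - p = (ptil - pbar) - (p - pbar) by ring]
          exact abs_sub _ _
      _ ≤ 2 * S + 14 * r / 3 := by linarith
  have hrpow : 0 ≤ 5 * (L / m) ^ ((3:ℝ) / 4) := by positivity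
  have h21 : 21 * L / m = 21 * r := by rw [hr]; ring
  rw [h21]
  nlinarith [htri, hStot, hrpow, hr0.le]
end

section
/- Let p(·|s,a) and p̃_h(·|s,a) be probability distributions over a finite state space S, supported on a set Succ(s,a) ⊆ S. Suppose |p(s'|s,a) − p̃_h(s'|s,a)| ≤ c₁ + c₂·√(p̃_h(s'|s,a)) for all s'. Let Ṽ : S → ℝ≥0 be any nonnegative function and set V̂ = ∑_{s'} p̃_h(s'|s,a)·Ṽ(s') and σ̃² = ∑_{s'} p̃_h(s'|s,a)·(Ṽ(s') − V̂)². Then |∑_{s'} (p(s'|s,a) − p̃_h(s'|s,a))·Ṽ(s')| ≤ c₁·|Succ(s,a)|·‖Ṽ‖_∞ + c₂·√(|Succ(s,a)|)·σ̃. -/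
open Finset

theorem expectation_diff_variance_bound {S : Type*} [Fintype S] [Nonempty S]
    (Succ : Finset S) (p ptil : S → ℝ) (c₁ c₂ : ℝ)
    (hc₁ : 0 ≤ c₁) (hc₂ : 0 ≤ c₂)
    (hp0 : ∀ s', 0 ≤ p s') (hp1 : ∑ s', p s' = 1)
    (hq0 : ∀ s', 0 ≤ ptil s') (hq1 : ∑ s', ptil s' = 1)
    (hpsupp : ∀ s', p s' ≠ 0 → s' ∈ Succ)
    (hqsupp : ∀ s', ptil s' ≠ 0 → s' ∈ Succ)
    (hclose : ∀ s', |p s' - ptil s'| ≤ c₁ + c₂ * Real.sqrt (ptil s'))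
    (V : S → ℝ) (hV : ∀ s', 0 ≤ V s')
    (Vhat σsq : ℝ)
    (hVhat : Vhat = ∑ s', ptil s' * V s')
    (hσsq : σsq = ∑ s', ptil s' * (V s' - Vhat) ^ 2) :
    |∑ s', (p s' - ptil s') * V s'| ≤
      c₁ * Succ.card * (univ.sup' univ_nonempty V)
        + c₂ * Real.sqrt (Succ.card) * Real.sqrt σsq := by
  set M := univ.sup' univ_nonempty V with hM
  have hVM : ∀ s', V s' ≤ M := fun s' => le_sup' V (mem_univ s')
  have hM0 : 0 ≤ M := le_trans (hV (Classical.arbitrary S)) (hVM _)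
  have hVhat0 : 0 ≤ Vhat := hVhat ▸ Finset.sum_nonneg fun i _ =>
    mul_nonneg (hq0 i) (hV i)
  have hVhatM : Vhat ≤ M := by
    rw [hVhat]
    calc ∑ s', ptil s' * V s' ≤ ∑ s', ptil s' * M :=
          Finset.sum_le_sum fun i _ => mul_le_mul_of_nonneg_left (hVM i) (hq0 i)
      _ = M := by rw [← Finset.sum_mul, hq1, one_mul]
  have habsM : ∀ s', |V s' - Vhat| ≤ M := fun s' =>
    abs_le.2 ⟨by linarith [hV s', hVhatM], by linarith [hVM s', hVhat0]⟩
  -- rewrite the sum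
  have key : ∑ s', (p s' - ptil s') * V s' = ∑ s', (p s' - ptil s') * (V s' - Vhat) := by
    have : ∑ s', (p s' - ptil s') * (V s' - Vhat)
        = ∑ s', (p s' - ptil s') * V s' - (∑ s', (p s' - ptil s')) * Vhat := by
      rw [Finset.sum_mul, ← Finset.sum_sub_distrib]
      exact Finset.sum_congr rfl fun i _ => by ring
    rw [this, Finset.sum_sub_distrib, hp1, hq1]
    ring
  rw [key]
  have hrestrict : ∑ s', (p s' - ptil s') * (V s' - Vhat)
      = ∑ s' ∈ Succ, (p s' - ptil s') * (V s' - Vhat) := by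
    refine (Finset.sum_subset (Finset.subset_univ Succ) ?_).symm
    intro x _ hx
    have hpx : p x = 0 := by_contra fun h => hx (hpsupp x h)
    have hqx : ptil x = 0 := by_contra fun h => hx (hqsupp x h)
    rw [hpx, hqx]; ring
  rw [hrestrict]
  calc |∑ s' ∈ Succ, (p s' - ptil s') * (V s' - Vhat)|
      ≤ ∑ s' ∈ Succ, |p s' - ptil s'| * |V s' - Vhat| := by
        refine (Finset.abs_sum_le_sum_abs _ _).trans ?_
        simp [abs_mul, le_refl]
    _ ≤ ∑ s' ∈ Succ, (c₁ + c₂ * Real.sqrt (ptil s')) * |V s' - Vhat| :=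
        Finset.sum_le_sum fun i _ =>
          mul_le_mul_of_nonneg_right (hclose i) (abs_nonneg _)
    _ = c₁ * ∑ s' ∈ Succ, |V s' - Vhat|
        + c₂ * ∑ s' ∈ Succ, Real.sqrt (ptil s') * |V s' - Vhat| := by
        rw [Finset.mul_sum, Finset.mul_sum, ← Finset.sum_add_distrib]
        exact Finset.sum_congr rfl fun i _ => by ring
    _ ≤ c₁ * (Succ.card * M) + c₂ * (Real.sqrt Succ.card * Real.sqrt σsq) := by
        gcongr c₁ * ?_ + c₂ * ?_
        · calc ∑ s' ∈ Succ, |V s' - Vhat| ≤ ∑ _s' ∈ Succ, M :=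
                Finset.sum_le_sum fun i _ => habsM i
            _ = Succ.card * M := by rw [Finset.sum_const, nsmul_eq_mul]
        · calc ∑ s' ∈ Succ, Real.sqrt (ptil s') * |V s' - Vhat|
              = ∑ s' ∈ Succ, 1 * (Real.sqrt (ptil s') * |V s' - Vhat|) := by simp
            _ ≤ Real.sqrt (∑ _s' ∈ Succ, (1:ℝ) ^ 2)
                * Real.sqrt (∑ s' ∈ Succ, (Real.sqrt (ptil s') * |V s' - Vhat|) ^ 2) :=
                Real.sum_mul_le_sqrt_mul_sqrt _ _ _
            _ ≤ Real.sqrt Succ.card * Real.sqrt σsq := by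
                gcongr Real.sqrt ?_ * Real.sqrt ?_
                · simp
                · rw [hσsq]
                  have heq : ∀ s', (Real.sqrt (ptil s') * |V s' - Vhat|) ^ 2
                      = ptil s' * (V s' - Vhat) ^ 2 := fun s' => by
                    rw [mul_pow, Real.sq_sqrt (hq0 s'), sq_abs]
                  rw [Finset.sum_congr rfl fun i _ => heq i]
                  exact Finset.sum_le_sum_of_subset_of_nonneg (Finset.subset_univ _)
                    fun i _ _ => mul_nonneg (hq0 i) (sq_nonneg _)
    _ = c₁ * Succ.card * M + c₂ * Real.sqrt Succ.card * Real.sqrt σsq := by ring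
end

section
/- Under the setting of the law of total variance for finite-horizon MDP returns, if all costs satisfy 0 ≤ c_h(s,a) ≤ c_max, then for every state s, 0 ≤ ∑_{i=1}^H E[σ_i²(s_i) | s_1 = s, π] ≤ H²·c_max². -/
open Finset

/-- Probability of a trajectory `τ` of `n` state-action pairs, starting at time step `h0`
in state `s0`, under policy `π` and transition kernels `p`. -/
noncomputable def trajProbFrom {S A : Type*} [Fintype S] [Fintype A] [DecidableEq S]
    (p : ℕ → S → A → S → ℝ) (π : ℕ → S → A → ℝ)
    (h0 : ℕ) (s0 : S) (n : ℕ) (τ : Fin n → S × A) : ℝ :=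
  (if hn : 0 < n then (if (τ ⟨0, hn⟩).1 = s0 then (1 : ℝ) else 0) else 1)
    * (∏ i : Fin n, π (h0 + i) (τ i).1 (τ i).2)
    * (∏ i : Fin n, if hi : i.1 + 1 < n then
        p (h0 + i) (τ i).1 (τ i).2 (τ ⟨i.1 + 1, hi⟩).1 else 1)

/-- Value function `V_h^π(s)` (time steps 0-based over `0, …, H-1`, `Vval H p π c H = 0`). -/
noncomputable def Vval {S A : Type*} [Fintype S] [Fintype A] [DecidableEq S] [DecidableEq A]
    (H : ℕ) (p : ℕ → S → A → S → ℝ) (π : ℕ → S → A → ℝ) (c : ℕ → S → A → ℝ)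
    (h : ℕ) (s : S) : ℝ :=
  ∑ τ : Fin (H - h) → S × A,
    trajProbFrom p π h s (H - h) τ * ∑ i : Fin (H - h), c (h + i) (τ i).1 (τ i).2

/-- One-step state transition probability `Pr[s_{h+1} = s' | s_h = s, π, p]`. -/
noncomputable def nextDist {S A : Type*} [Fintype A]
    (p : ℕ → S → A → S → ℝ) (π : ℕ → S → A → ℝ) (h : ℕ) (s s' : S) : ℝ :=
  ∑ a : A, π h s a * p h s a s'

/-- Variance of the return: `𝒱_h(s) = E[(∑_{i=h}^{H-1} c_i(s_i,a_i) − V_h^π(s))² | s_h = s]`. -/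
noncomputable def retVar {S A : Type*} [Fintype S] [Fintype A] [DecidableEq S] [DecidableEq A]
    (H : ℕ) (p : ℕ → S → A → S → ℝ) (π : ℕ → S → A → ℝ) (c : ℕ → S → A → ℝ)
    (h : ℕ) (s : S) : ℝ :=
  ∑ τ : Fin (H - h) → S × A,
    trajProbFrom p π h s (H - h) τ *
      ((∑ i : Fin (H - h), c (h + i) (τ i).1 (τ i).2) - Vval H p π c h s) ^ 2

/-- Local variance of the value function:
`σ_h²(s) = E[(V_{h+1}^π(s_{h+1}) − E[V_{h+1}^π(s_{h+1}) | s_h = s])² | s_h = s]`. -/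
noncomputable def localVar {S A : Type*} [Fintype S] [Fintype A] [DecidableEq S] [DecidableEq A]
    (H : ℕ) (p : ℕ → S → A → S → ℝ) (π : ℕ → S → A → ℝ) (c : ℕ → S → A → ℝ)
    (h : ℕ) (s : S) : ℝ :=
  ∑ s' : S, nextDist p π h s s' *
    (Vval H p π c (h + 1) s' - ∑ s'' : S, nextDist p π h s s'' * Vval H p π c (h + 1) s'') ^ 2

/-- `reach p π h s k s' = Pr[s_{h+k} = s' | s_h = s, π, p]`. -/
noncomputable def reach {S A : Type*} [Fintype S] [Fintype A] [DecidableEq S]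
    (p : ℕ → S → A → S → ℝ) (π : ℕ → S → A → ℝ) (h : ℕ) (s : S) : ℕ → S → ℝ
  | 0, s' => if s' = s then 1 else 0
  | k + 1, s' => ∑ s'' : S, reach p π h s k s'' * nextDist p π (h + k) s'' s'


section
set_option linter.unusedSectionVars false
variable {S A : Type*} [Fintype S] [Fintype A] [DecidableEq S] [DecidableEq A]
  (p : ℕ → S → A → S → ℝ) (π : ℕ → S → A → ℝ)

lemma cons_mk_succ (m : ℕ) (x : S × A) (τ' : Fin m → S × A) (j : ℕ) (hj : j + 1 < m + 1) :
    (Fin.cons x τ' : Fin (m+1) → S × A) ⟨j+1, hj⟩ = τ' ⟨j, Nat.lt_of_succ_lt_succ hj⟩ := by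
  have : (⟨j+1, hj⟩ : Fin (m+1)) = (⟨j, Nat.lt_of_succ_lt_succ hj⟩ : Fin m).succ := rfl
  rw [this, Fin.cons_succ]

lemma trajProb_cons (hp1 : ∀ h s a, ∑ s', p h s a s' = 1)
    (h : ℕ) (s : S) (m : ℕ) (x : S × A) (τ' : Fin m → S × A) :
    trajProbFrom p π h s (m+1) (Fin.cons x τ') =
      (if x.1 = s then (1:ℝ) else 0) * π h x.1 x.2 *
        ∑ s' : S, p h x.1 x.2 s' * trajProbFrom p π (h+1) s' m τ' := by
  rcases Nat.eq_zero_or_pos m with hm | hm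
  · subst hm
    simp [trajProbFrom, hp1]
  · -- collapse the sum on the RHS
    have tail : ∀ s' : S, trajProbFrom p π (h+1) s' m τ' =
        (if (τ' ⟨0, hm⟩).1 = s' then (1:ℝ) else 0) *
          ((∏ i : Fin m, π (h+1+i) (τ' i).1 (τ' i).2) *
           (∏ i : Fin m, if hi : i.1 + 1 < m then
              p (h+1+i) (τ' i).1 (τ' i).2 (τ' ⟨i.1+1, hi⟩).1 else 1)) := by
      intro s'; rw [trajProbFrom, dif_pos hm]; ring
    rw [Finset.sum_congr rfl (fun s' _ => by rw [tail s'])]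
    rw [show (∑ s' : S, p h x.1 x.2 s' *
        ((if (τ' ⟨0, hm⟩).1 = s' then (1:ℝ) else 0) *
          ((∏ i : Fin m, π (h+1+i) (τ' i).1 (τ' i).2) *
           (∏ i : Fin m, if hi : i.1 + 1 < m then
              p (h+1+i) (τ' i).1 (τ' i).2 (τ' ⟨i.1+1, hi⟩).1 else 1)))) =
        p h x.1 x.2 (τ' ⟨0, hm⟩).1 *
          ((∏ i : Fin m, π (h+1+i) (τ' i).1 (τ' i).2) *
           (∏ i : Fin m, if hi : i.1 + 1 < m then
              p (h+1+i) (τ' i).1 (τ' i).2 (τ' ⟨i.1+1, hi⟩).1 else 1)) from by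
      simp [mul_ite, mul_comm]]
    -- now expand the LHS
    rw [trajProbFrom, dif_pos (Nat.succ_pos m)]
    rw [show ((Fin.cons x τ' : Fin (m+1) → S × A) ⟨0, Nat.succ_pos m⟩) = x from rfl]
    rw [Fin.prod_univ_succ (fun i : Fin (m+1) =>
      π (h + i) ((Fin.cons x τ' : Fin (m+1) → S × A) i).1 ((Fin.cons x τ' : Fin (m+1) → S × A) i).2)]
    rw [Fin.prod_univ_succ (fun i : Fin (m+1) => if hi : i.1 + 1 < m+1 then
        p (h + i) ((Fin.cons x τ' : Fin (m+1) → S × A) i).1 ((Fin.cons x τ' : Fin (m+1) → S × A) i).2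
          ((Fin.cons x τ' : Fin (m+1) → S × A) ⟨i.1 + 1, hi⟩).1 else 1)]
    simp only [Fin.cons_zero, Fin.cons_succ, Fin.val_succ, Fin.val_zero, add_zero]
    rw [dif_pos (Nat.succ_lt_succ hm)]
    rw [cons_mk_succ]
    have hπprod : ∀ i : Fin m, π (h + (i.1 + 1)) (τ' i).1 (τ' i).2 = π (h + 1 + i.1) (τ' i).1 (τ' i).2 := by
      intro i; congr 1; omega
    rw [Finset.prod_congr rfl (fun i _ => hπprod i)]
    have hpprod : ∀ i : Fin m,
        (if hi : i.1 + 1 + 1 < m + 1 then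
          p (h + (i.1+1)) (τ' i).1 (τ' i).2
            ((Fin.cons x τ' : Fin (m+1) → S × A) ⟨i.1 + 1 + 1, hi⟩).1 else 1) =
        (if hi : i.1 + 1 < m then
          p (h + 1 + i.1) (τ' i).1 (τ' i).2 (τ' ⟨i.1 + 1, hi⟩).1 else 1) := by
      intro i
      by_cases hi : i.1 + 1 < m
      · rw [dif_pos (Nat.succ_lt_succ hi), dif_pos hi, cons_mk_succ]
        have : h + (i.1 + 1) = h + 1 + i.1 := by omega
        rw [this]
      · rw [dif_neg (by omega), dif_neg hi]
    rw [Finset.prod_congr rfl (fun i _ => hpprod i)]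
    ring
end

section
set_option linter.unusedSectionVars false
variable {S A : Type*} [Fintype S] [Fintype A] [DecidableEq S] [DecidableEq A]
  (p : ℕ → S → A → S → ℝ) (π : ℕ → S → A → ℝ) (c : ℕ → S → A → ℝ)

lemma sum_pi_cons {Y : Type*} [AddCommMonoid Y] (n : ℕ) (g : (Fin (n+1) → S × A) → Y) :
    ∑ τ : Fin (n+1) → S × A, g τ = ∑ x : S × A, ∑ τ' : Fin n → S × A, g (Fin.cons x τ') := by
  rw [← Equiv.sum_comp (Fin.consEquiv (fun _ => S × A)) g, Fintype.sum_prod_type]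
  rfl

lemma sum_trajProb_one (hp1 : ∀ h s a, ∑ s', p h s a s' = 1)
    (hπ1 : ∀ h s, ∑ a, π h s a = 1) :
    ∀ (n h : ℕ) (s : S), ∑ τ : Fin n → S × A, trajProbFrom p π h s n τ = 1 := by
  intro n
  induction n with
  | zero => intro h s; simp [trajProbFrom]
  | succ m ih =>
    intro h s
    rw [sum_pi_cons]
    have key : ∀ x : S × A, (∑ τ' : Fin m → S × A, trajProbFrom p π h s (m+1) (Fin.cons x τ'))
        = (if x.1 = s then (1:ℝ) else 0) * π h x.1 x.2 := by
      intro x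
      rw [Finset.sum_congr rfl (fun τ' _ => trajProb_cons p π hp1 h s m x τ')]
      rw [← Finset.mul_sum, Finset.sum_comm]
      have : ∀ s' : S, (∑ τ' : Fin m → S × A, p h x.1 x.2 s' * trajProbFrom p π (h+1) s' m τ')
          = p h x.1 x.2 s' := by
        intro s'; rw [← Finset.mul_sum, ih (h+1) s', mul_one]
      rw [Finset.sum_congr rfl (fun s' _ => this s'), hp1, mul_one]
    rw [Finset.sum_congr rfl (fun x _ => key x), Fintype.sum_prod_type]
    have : ∀ s₁ : S, (∑ a : A, (if s₁ = s then (1:ℝ) else 0) * π h s₁ a)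
        = if s₁ = s then 1 else 0 := by
      intro s₁
      rw [← Finset.mul_sum, hπ1, mul_one]
    rw [Finset.sum_congr rfl (fun s₁ _ => this s₁)]
    simp
end

noncomputable def Gfun {S A : Type*} [Fintype S] [Fintype A] [DecidableEq S]
    (p : ℕ → S → A → S → ℝ) (π : ℕ → S → A → ℝ) (c : ℕ → S → A → ℝ)
    (n h : ℕ) (s : S) : ℝ :=
  ∑ τ : Fin n → S × A, trajProbFrom p π h s n τ * ∑ i : Fin n, c (h + i) (τ i).1 (τ i).2

section
set_option linter.unusedSectionVars false
variable {S A : Type*} [Fintype S] [Fintype A] [DecidableEq S] [DecidableEq A]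
  (p : ℕ → S → A → S → ℝ) (π : ℕ → S → A → ℝ) (c : ℕ → S → A → ℝ)

lemma Gfun_zero (h : ℕ) (s : S) : Gfun p π c 0 h s = 0 := by
  simp [Gfun]

lemma Gfun_succ (hp1 : ∀ h s a, ∑ s', p h s a s' = 1)
    (hπ1 : ∀ h s, ∑ a, π h s a = 1) (m h : ℕ) (s : S) :
    Gfun p π c (m+1) h s = (∑ a : A, π h s a * c h s a)
      + ∑ s' : S, nextDist p π h s s' * Gfun p π c m (h+1) s' := by
  rw [Gfun, sum_pi_cons]
  have hcost : ∀ (x : S × A) (τ' : Fin m → S × A),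
      (∑ i : Fin (m+1), c (h + i) ((Fin.cons x τ' : Fin (m+1) → S × A) i).1
        ((Fin.cons x τ' : Fin (m+1) → S × A) i).2)
      = c h x.1 x.2 + ∑ i : Fin m, c (h+1+i) (τ' i).1 (τ' i).2 := by
    intro x τ'
    rw [Fin.sum_univ_succ]
    simp only [Fin.cons_zero, Fin.cons_succ, Fin.val_succ, Fin.val_zero, add_zero]
    congr 1
    refine Finset.sum_congr rfl fun i _ => ?_
    have : h + (i.1 + 1) = h + 1 + i.1 := by omega
    rw [this]
  have inner : ∀ (x : S × A) (s' : S),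
      (∑ τ' : Fin m → S × A, trajProbFrom p π (h+1) s' m τ' *
        (c h x.1 x.2 + ∑ i : Fin m, c (h+1+i) (τ' i).1 (τ' i).2))
      = c h x.1 x.2 + Gfun p π c m (h+1) s' := by
    intro x s'
    have : ∀ τ' : Fin m → S × A, trajProbFrom p π (h+1) s' m τ' *
        (c h x.1 x.2 + ∑ i : Fin m, c (h+1+i) (τ' i).1 (τ' i).2)
        = trajProbFrom p π (h+1) s' m τ' * c h x.1 x.2
          + trajProbFrom p π (h+1) s' m τ' * ∑ i : Fin m, c (h+1+i) (τ' i).1 (τ' i).2 := by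
      intro τ'; ring
    rw [Finset.sum_congr rfl (fun τ' _ => this τ'), Finset.sum_add_distrib,
      ← Finset.sum_mul, sum_trajProb_one p π hp1 hπ1, one_mul, Gfun]
  have key : ∀ x : S × A,
      (∑ τ' : Fin m → S × A, trajProbFrom p π h s (m+1) (Fin.cons x τ') *
        ∑ i : Fin (m+1), c (h + i) ((Fin.cons x τ' : Fin (m+1) → S × A) i).1
          ((Fin.cons x τ' : Fin (m+1) → S × A) i).2)
      = (if x.1 = s then (1:ℝ) else 0) * π h x.1 x.2 *
          ∑ s' : S, p h x.1 x.2 s' * (c h x.1 x.2 + Gfun p π c m (h+1) s') := by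
    intro x
    rw [Finset.sum_congr rfl
      (fun τ' _ => by rw [trajProb_cons p π hp1 h s m x τ', hcost x τ'])]
    rw [Finset.mul_sum]
    rw [Finset.sum_congr rfl (fun τ' _ => by
      rw [mul_assoc, Finset.sum_mul, Finset.mul_sum] :
        ∀ τ' ∈ Finset.univ, _ = ∑ s' : S,
          (if x.1 = s then (1:ℝ) else 0) * π h x.1 x.2 *
            (p h x.1 x.2 s' * trajProbFrom p π (h+1) s' m τ' *
              (c h x.1 x.2 + ∑ i : Fin m, c (h+1+i) (τ' i).1 (τ' i).2)))]
    rw [Finset.sum_comm]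
    refine Finset.sum_congr rfl fun s' _ => ?_
    rw [← inner x s', Finset.mul_sum, Finset.mul_sum]
    refine Finset.sum_congr rfl fun τ' _ => ?_
    ring
  rw [Finset.sum_congr rfl (fun x _ => key x), Fintype.sum_prod_type]
  have collapse : ∀ s₁ : S,
      (∑ a : A, (if s₁ = s then (1:ℝ) else 0) * π h s₁ a *
        ∑ s' : S, p h s₁ a s' * (c h s₁ a + Gfun p π c m (h+1) s'))
      = if s₁ = s then (∑ a : A, π h s₁ a *
          ∑ s' : S, p h s₁ a s' * (c h s₁ a + Gfun p π c m (h+1) s')) else 0 := by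
    intro s₁
    by_cases hs : s₁ = s <;> simp [hs]
  rw [Finset.sum_congr rfl (fun s₁ _ => collapse s₁), Finset.sum_ite_eq' Finset.univ s,
    if_pos (Finset.mem_univ s)]
  have hinner : ∀ a : A, (∑ s' : S, p h s a s' * (c h s a + Gfun p π c m (h+1) s'))
      = c h s a + ∑ s' : S, p h s a s' * Gfun p π c m (h+1) s' := by
    intro a
    rw [Finset.sum_congr rfl (fun s' _ => by ring :
      ∀ s' ∈ Finset.univ, p h s a s' * (c h s a + Gfun p π c m (h+1) s')
        = p h s a s' * c h s a + p h s a s' * Gfun p π c m (h+1) s'),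
      Finset.sum_add_distrib, ← Finset.sum_mul, hp1, one_mul]
  rw [Finset.sum_congr rfl (fun a _ => by rw [hinner a] :
    ∀ a ∈ Finset.univ, π h s a * (∑ s' : S, p h s a s' * (c h s a + Gfun p π c m (h+1) s'))
      = π h s a * (c h s a + ∑ s' : S, p h s a s' * Gfun p π c m (h+1) s'))]
  rw [Finset.sum_congr rfl (fun a _ => by rw [mul_add, Finset.mul_sum] :
    ∀ a ∈ Finset.univ, π h s a * (c h s a + ∑ s' : S, p h s a s' * Gfun p π c m (h+1) s')
      = π h s a * c h s a + ∑ s' : S, π h s a * (p h s a s' * Gfun p π c m (h+1) s'))]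
  rw [Finset.sum_add_distrib]
  congr 1
  rw [Finset.sum_comm]
  refine Finset.sum_congr rfl fun s' _ => ?_
  rw [nextDist, Finset.sum_mul]
  refine Finset.sum_congr rfl fun a _ => ?_
  ring
end

section
set_option linter.unusedSectionVars false
variable {S A : Type*} [Fintype S] [Fintype A] [DecidableEq S] [DecidableEq A]
  (p : ℕ → S → A → S → ℝ) (π : ℕ → S → A → ℝ) (c : ℕ → S → A → ℝ) (cmax : ℝ)
  (H : ℕ)
  (hp0 : ∀ h s a s', 0 ≤ p h s a s') (hp1 : ∀ h s a, ∑ s', p h s a s' = 1)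
  (hπ0 : ∀ h s a, 0 ≤ π h s a) (hπ1 : ∀ h s, ∑ a, π h s a = 1)
  (hc0 : ∀ h s a, 0 ≤ c h s a) (hc1 : ∀ h s a, c h s a ≤ cmax)

include hπ0 hp0 in
lemma nextDist_nonneg (h : ℕ) (s s' : S) : 0 ≤ nextDist p π h s s' :=
  Finset.sum_nonneg fun a _ => mul_nonneg (hπ0 h s a) (hp0 h s a s')

include hπ1 hp1 in
lemma nextDist_sum_one (h : ℕ) (s : S) : ∑ s' : S, nextDist p π h s s' = 1 := by
  simp only [nextDist]
  rw [Finset.sum_comm]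
  rw [Finset.sum_congr rfl (fun a _ => by rw [← Finset.mul_sum, hp1, mul_one] :
    ∀ a ∈ Finset.univ, (∑ s' : S, π h s a * p h s a s') = π h s a)]
  exact hπ1 h s

include hπ0 hπ1 hc0 in
lemma cbar_nonneg (h : ℕ) (s : S) : 0 ≤ ∑ a : A, π h s a * c h s a :=
  Finset.sum_nonneg fun a _ => mul_nonneg (hπ0 h s a) (hc0 h s a)

include hπ0 hπ1 hc1 in
lemma cbar_le (h : ℕ) (s : S) : ∑ a : A, π h s a * c h s a ≤ cmax := by
  calc ∑ a : A, π h s a * c h s a ≤ ∑ a : A, π h s a * cmax :=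
        Finset.sum_le_sum fun a _ => mul_le_mul_of_nonneg_left (hc1 h s a) (hπ0 h s a)
    _ = cmax := by rw [← Finset.sum_mul, hπ1, one_mul]

include hp0 hp1 hπ0 hπ1 hc0 hc1 in
lemma Gfun_bounds (hcm : 0 ≤ cmax) :
    ∀ n h (s : S), 0 ≤ Gfun p π c n h s ∧ Gfun p π c n h s ≤ n * cmax := by
  intro n
  induction n with
  | zero => intro h s; rw [Gfun_zero]; simp
  | succ m ih =>
    intro h s
    rw [Gfun_succ p π c hp1 hπ1]
    constructor
    · have h2 : 0 ≤ ∑ s' : S, nextDist p π h s s' * Gfun p π c m (h+1) s' :=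
        Finset.sum_nonneg fun s' _ => mul_nonneg (nextDist_nonneg p π hp0 hπ0 h s s')
          (ih (h+1) s').1
      have h1 := cbar_nonneg π c hπ0 hπ1 hc0 h s
      linarith
    · have h1 := cbar_le π c cmax hπ0 hπ1 hc1 h s
      have h2 : ∑ s' : S, nextDist p π h s s' * Gfun p π c m (h+1) s' ≤ (m : ℝ) * cmax := by
        calc ∑ s' : S, nextDist p π h s s' * Gfun p π c m (h+1) s'
            ≤ ∑ s' : S, nextDist p π h s s' * ((m : ℝ) * cmax) :=
              Finset.sum_le_sum fun s' _ => mul_le_mul_of_nonneg_left (ih (h+1) s').2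
                (nextDist_nonneg p π hp0 hπ0 h s s')
          _ = (m : ℝ) * cmax := by
              rw [← Finset.sum_mul, nextDist_sum_one p π hp1 hπ1, one_mul]
      push_cast
      linarith

lemma Vval_eq_Gfun (h : ℕ) (s : S) : Vval H p π c h s = Gfun p π c (H - h) h s := rfl

lemma Vval_of_ge (h : ℕ) (hh : H ≤ h) (s : S) : Vval H p π c h s = 0 := by
  rw [Vval_eq_Gfun, Nat.sub_eq_zero_of_le hh, Gfun_zero]

include hp1 hπ1 in
lemma Vval_bellman (h : ℕ) (hh : h < H) (s : S) :
    Vval H p π c h s = (∑ a : A, π h s a * c h s a)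
      + ∑ s' : S, nextDist p π h s s' * Vval H p π c (h+1) s' := by
  have h1 : H - h = (H - (h+1)) + 1 := by omega
  rw [Vval_eq_Gfun, h1, Gfun_succ p π c hp1 hπ1]
  rfl

include hp0 hp1 hπ0 hπ1 hc0 hc1 in
lemma Vval_bounds (hcm : 0 ≤ cmax) (h : ℕ) (s : S) :
    0 ≤ Vval H p π c h s ∧ Vval H p π c h s ≤ (H : ℝ) * cmax := by
  have := Gfun_bounds p π c cmax hp0 hp1 hπ0 hπ1 hc0 hc1 hcm (H - h) h s
  refine ⟨this.1, le_trans this.2 ?_⟩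
  have : ((H - h : ℕ) : ℝ) ≤ (H : ℝ) := by
    exact_mod_cast Nat.sub_le H h
  exact mul_le_mul_of_nonneg_right this hcm

include hp0 hπ0 in
lemma reach_nonneg (s : S) : ∀ (k : ℕ) (s' : S), 0 ≤ reach p π 0 s k s' := by
  intro k
  induction k with
  | zero => intro s'; rw [reach]; positivity
  | succ m ih =>
    intro s'
    rw [reach]
    exact Finset.sum_nonneg fun s'' _ => mul_nonneg (ih s'')
      (nextDist_nonneg p π hp0 hπ0 _ s'' s')

lemma reach_step (s : S) (k : ℕ) (f : S → ℝ) :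
    ∑ s' : S, reach p π 0 s (k+1) s' * f s'
      = ∑ s'' : S, reach p π 0 s k s'' * ∑ s' : S, nextDist p π k s'' s' * f s' := by
  rw [Finset.sum_congr rfl (fun s' _ => by rw [reach, Finset.sum_mul] :
    ∀ s' ∈ Finset.univ, reach p π 0 s (k+1) s' * f s'
      = ∑ s'' : S, reach p π 0 s k s'' * nextDist p π (0 + k) s'' s' * f s')]
  rw [Finset.sum_comm]
  refine Finset.sum_congr rfl fun s'' _ => ?_
  rw [Finset.mul_sum]
  refine Finset.sum_congr rfl fun s' _ => ?_
  rw [Nat.zero_add]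
  ring

include hp1 hπ1 in
lemma localVar_eq (h : ℕ) (s : S) :
    localVar H p π c h s
      = (∑ s' : S, nextDist p π h s s' * (Vval H p π c (h+1) s') ^ 2)
        - (∑ s' : S, nextDist p π h s s' * Vval H p π c (h+1) s') ^ 2 := by
  rw [localVar]
  set μ := ∑ s'' : S, nextDist p π h s s'' * Vval H p π c (h+1) s'' with hμ
  rw [Finset.sum_congr rfl (fun s' _ => by ring :
    ∀ s' ∈ Finset.univ, nextDist p π h s s' * (Vval H p π c (h+1) s' - μ) ^ 2
      = nextDist p π h s s' * (Vval H p π c (h+1) s') ^ 2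
        - 2 * μ * (nextDist p π h s s' * Vval H p π c (h+1) s')
        + μ ^ 2 * nextDist p π h s s')]
  rw [Finset.sum_add_distrib, Finset.sum_sub_distrib, ← Finset.mul_sum, ← Finset.mul_sum,
    ← hμ, nextDist_sum_one p π hp1 hπ1, mul_one]
  ring

include hp0 hπ0 in
lemma localVar_nonneg (h : ℕ) (s : S) : 0 ≤ localVar H p π c h s :=
  Finset.sum_nonneg fun s' _ => mul_nonneg (nextDist_nonneg p π hp0 hπ0 h s s') (sq_nonneg _)

end


/-- The sum of expected local variances over an episode is between `0` and `H² c_max²`. -/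
theorem sum_local_variance_bound {S A : Type*} [Fintype S] [Fintype A] [Nonempty S]
    [Nonempty A] [DecidableEq S] [DecidableEq A]
    (H : ℕ) (p : ℕ → S → A → S → ℝ) (π : ℕ → S → A → ℝ) (c : ℕ → S → A → ℝ) (cmax : ℝ)
    (hp0 : ∀ h s a s', 0 ≤ p h s a s') (hp1 : ∀ h s a, ∑ s', p h s a s' = 1)
    (hπ0 : ∀ h s a, 0 ≤ π h s a) (hπ1 : ∀ h s, ∑ a, π h s a = 1)
    (hc0 : ∀ h s a, 0 ≤ c h s a) (hc1 : ∀ h s a, c h s a ≤ cmax)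
    (s : S) :
    0 ≤ ∑ i ∈ Finset.range H, ∑ s' : S, reach p π 0 s i s' * localVar H p π c i s' ∧
    ∑ i ∈ Finset.range H, ∑ s' : S, reach p π 0 s i s' * localVar H p π c i s'
      ≤ (H : ℝ) ^ 2 * cmax ^ 2 := by
  have hcm : 0 ≤ cmax :=
    le_trans (hc0 0 (Classical.arbitrary S) (Classical.arbitrary A)) (hc1 0 _ _)
  set V : ℕ → S → ℝ := fun k => Vval H p π c k with hV
  set R : ℕ → S → ℝ := fun k => reach p π 0 s k with hR
  set cb : ℕ → S → ℝ := fun k s' => ∑ a : A, π k s' a * c k s' a with hcb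
  set Φ : ℕ → ℝ := fun k => ∑ s' : S, R k s' * (V k s') ^ 2 with hΦ
  constructor
  · exact Finset.sum_nonneg fun k _ => Finset.sum_nonneg fun s' _ =>
      mul_nonneg (reach_nonneg p π hp0 hπ0 s k s') (localVar_nonneg p π c H hp0 hπ0 k s')
  have hVb : ∀ k s', 0 ≤ V k s' ∧ V k s' ≤ (H : ℝ) * cmax := fun k s' =>
    Vval_bounds p π c cmax H hp0 hp1 hπ0 hπ1 hc0 hc1 hcm k s'
  have hcbb : ∀ k s', 0 ≤ cb k s' ∧ cb k s' ≤ cmax := fun k s' =>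
    ⟨cbar_nonneg π c hπ0 hπ1 hc0 k s', cbar_le π c cmax hπ0 hπ1 hc1 k s'⟩
  -- the per-step identity
  have term : ∀ k ∈ Finset.range H,
      (∑ s' : S, R k s' * localVar H p π c k s')
        = (Φ (k+1) - Φ k) + ∑ s' : S, R k s' * (cb k s' * (2 * V k s' - cb k s')) := by
    intro k hk
    have hkH : k < H := Finset.mem_range.mp hk
    have e1 : ∀ s' : S, localVar H p π c k s'
        = (∑ s'' : S, nextDist p π k s' s'' * (V (k+1) s'') ^ 2)
          - ((V k s' - cb k s') ^ 2) := by
      intro s'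
      rw [localVar_eq p π c H hp1 hπ1 k s']
      have hb := Vval_bellman p π c H hp1 hπ1 k hkH s'
      have : ∑ s'' : S, nextDist p π k s' s'' * Vval H p π c (k+1) s''
          = V k s' - cb k s' := by
        rw [hV, hcb]; simp only; linarith [hb]
      rw [this]
    rw [Finset.sum_congr rfl (fun s' _ => by rw [e1 s']; ring :
      ∀ s' ∈ Finset.univ, R k s' * localVar H p π c k s'
        = R k s' * ∑ s'' : S, nextDist p π k s' s'' * (V (k+1) s'') ^ 2
          - (R k s' * (V k s') ^ 2 - R k s' * (cb k s' * (2 * V k s' - cb k s'))))]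
    rw [Finset.sum_sub_distrib, Finset.sum_sub_distrib]
    have : ∑ s' : S, R k s' * ∑ s'' : S, nextDist p π k s' s'' * (V (k+1) s'') ^ 2
        = Φ (k+1) := by
      rw [hΦ]; simp only
      rw [reach_step p π s k (fun s'' => V (k+1) s'' ^ 2)]
    rw [this]
    ring
  rw [Finset.sum_congr rfl term, Finset.sum_add_distrib, Finset.sum_range_sub (f := Φ)]
  have hΦH : Φ H = 0 := by
    refine Finset.sum_eq_zero fun s' _ => ?_
    rw [hV]; simp only
    rw [Vval_of_ge p π c H H le_rfl s']
    ring
  have hΦ0 : Φ 0 = (V 0 s) ^ 2 := by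
    rw [hΦ]; simp only [hR]
    rw [Finset.sum_congr rfl (fun s' _ => by rw [reach, ite_mul, one_mul, zero_mul] :
      ∀ s' ∈ Finset.univ, reach p π 0 s 0 s' * (V 0 s') ^ 2
        = if s' = s then (V 0 s') ^ 2 else 0)]
    rw [Finset.sum_ite_eq' Finset.univ s, if_pos (Finset.mem_univ s)]
  -- telescope for expected costs
  have gstep : ∀ k ∈ Finset.range H,
      (∑ s' : S, R k s' * cb k s')
        = (fun k => ∑ s' : S, R k s' * V k s') k
          - (fun k => ∑ s' : S, R k s' * V k s') (k+1) := by
    intro k hk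
    have hkH : k < H := Finset.mem_range.mp hk
    simp only
    rw [hR]; simp only
    rw [reach_step p π s k (fun s'' => V (k+1) s'')]
    rw [Finset.sum_congr rfl (fun s' _ => by
        rw [hV]; simp only
        rw [Vval_bellman p π c H hp1 hπ1 k hkH s']
        ring :
      ∀ s' ∈ Finset.univ, reach p π 0 s k s' * V k s'
        = reach p π 0 s k s' * cb k s'
          + reach p π 0 s k s' * ∑ s'' : S, nextDist p π k s' s'' * V (k+1) s'')]
    rw [Finset.sum_add_distrib]
    ring
  have esum : ∑ k ∈ Finset.range H, ∑ s' : S, R k s' * cb k s' = V 0 s := by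
    rw [Finset.sum_congr rfl gstep,
      Finset.sum_range_sub' (f := fun k => ∑ s' : S, R k s' * V k s')]
    have hgH : ∑ s' : S, R H s' * V H s' = 0 := by
      refine Finset.sum_eq_zero fun s' _ => ?_
      rw [hV]; simp only
      rw [Vval_of_ge p π c H H le_rfl s']
      ring
    have hg0 : ∑ s' : S, R 0 s' * V 0 s' = V 0 s := by
      rw [hR]; simp only
      rw [Finset.sum_congr rfl (fun s' _ => by rw [reach, ite_mul, one_mul, zero_mul] :
        ∀ s' ∈ Finset.univ, reach p π 0 s 0 s' * V 0 s'
          = if s' = s then V 0 s' else 0)]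
      rw [Finset.sum_ite_eq' Finset.univ s, if_pos (Finset.mem_univ s)]
    rw [hgH, hg0, sub_zero]
  have hb : ∑ k ∈ Finset.range H, ∑ s' : S, R k s' * (cb k s' * (2 * V k s' - cb k s'))
      ≤ 2 * (H : ℝ) * cmax * V 0 s := by
    calc ∑ k ∈ Finset.range H, ∑ s' : S, R k s' * (cb k s' * (2 * V k s' - cb k s'))
        ≤ ∑ k ∈ Finset.range H, ∑ s' : S, R k s' * (2 * (H : ℝ) * cmax * cb k s') := by
          refine Finset.sum_le_sum fun k _ => Finset.sum_le_sum fun s' _ => ?_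
          refine mul_le_mul_of_nonneg_left ?_ (reach_nonneg p π hp0 hπ0 s k s')
          have h1 := (hcbb k s').1
          have h2 := (hcbb k s').2
          have h3 := (hVb k s').1
          have h4 := (hVb k s').2
          nlinarith
      _ = 2 * (H : ℝ) * cmax * V 0 s := by
          rw [← esum, Finset.mul_sum]
          refine Finset.sum_congr rfl fun k _ => ?_
          rw [Finset.mul_sum]
          refine Finset.sum_congr rfl fun s' _ => ?_
          ring
  rw [hΦH, hΦ0]
  have hV0 := hVb 0 s
  nlinarith [sq_nonneg ((H : ℝ) * cmax - V 0 s)]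
end

section
/- Let (X_{κ,ι})_{κ ∈ K, ι ∈ I} be a family of finite sets of state-action pairs indexed by knownness κ and importance ι, where K ⊆ ℕ. Let w : S×A → ℝ≥0, n : S×A → ℕ, m > 0 be such that for every (s,a) ∈ X_{κ,ι} we have n(s,a) ≥ m·w(s,a)·κ, and suppose |X_{κ,ι}| ≤ κ for all (κ,ι). Then ∑_{κ,ι} ∑_{(s,a) ∈ X_{κ,ι}} w(s,a)/max(1, n(s,a)−1) ≤ 2·|K×I|/m. -/
theorem knownness_counting {S A : Type*} [DecidableEq S] [DecidableEq A]
    (K I : Finset ℕ) (X : ℕ → ℕ → Finset (S × A))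
    (w : S × A → ℝ) (n : S × A → ℕ) (m : ℝ) (hm : 0 < m)
    (hw : ∀ sa, 0 ≤ w sa)
    (hcount : ∀ κ ∈ K, ∀ ι ∈ I, ∀ sa ∈ X κ ι, m * w sa * κ ≤ (n sa : ℝ))
    (hcard : ∀ κ ∈ K, ∀ ι ∈ I, (X κ ι).card ≤ κ) :
    ∑ κ ∈ K, ∑ ι ∈ I, ∑ sa ∈ X κ ι, w sa / max 1 ((n sa : ℝ) - 1)
      ≤ 2 * (K.card * I.card) / m := by
  have key : ∀ κ ∈ K, ∀ ι ∈ I,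
      ∑ sa ∈ X κ ι, w sa / max 1 ((n sa : ℝ) - 1) ≤ 2 / m := by
    intro κ hκ ι hι
    rcases Nat.eq_zero_or_pos κ with h0 | hpos
    · have hX : X κ ι = ∅ := Finset.card_eq_zero.mp
        (Nat.le_antisymm (h0 ▸ hcard κ hκ ι hι) (Nat.zero_le _))
      rw [hX]
      simp
      positivity
    · have hterm : ∀ sa ∈ X κ ι,
          w sa / max 1 ((n sa : ℝ) - 1) ≤ 2 / (m * κ) := by
        intro sa hsa
        have hn := hcount κ hκ ι hι sa hsa
        have hκ' : (1 : ℝ) ≤ κ := by exact_mod_cast hpos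
        have hmaxpos : (0 : ℝ) < max 1 ((n sa : ℝ) - 1) :=
          lt_of_lt_of_le one_pos (le_max_left _ _)
        have hmk : 0 < m * κ := by positivity
        by_cases hw0 : w sa = 0
        · rw [hw0, zero_div]
          positivity
        · have hwpos : 0 < w sa := lt_of_le_of_ne (hw sa) (Ne.symm hw0)
          have hnpos : (0 : ℝ) < (n sa : ℝ) := lt_of_lt_of_le (by positivity) hn
          have hmax : (n sa : ℝ) / 2 ≤ max 1 ((n sa : ℝ) - 1) := by
            rcases le_total ((n sa : ℝ)) 2 with h | h
            · exact le_trans (by linarith) (le_max_left _ _)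
            · exact le_trans (by linarith) (le_max_right _ _)
          rw [div_le_div_iff₀ hmaxpos hmk]
          nlinarith [hmax]
      calc ∑ sa ∈ X κ ι, w sa / max 1 ((n sa : ℝ) - 1)
          ≤ ∑ _sa ∈ X κ ι, 2 / (m * κ) := Finset.sum_le_sum hterm
        _ = (X κ ι).card * (2 / (m * κ)) := by
            rw [Finset.sum_const, nsmul_eq_mul]
        _ ≤ κ * (2 / (m * κ)) := by
            apply mul_le_mul_of_nonneg_right
            · exact_mod_cast hcard κ hκ ι hι
            · positivity
        _ = 2 / m := by
            have hκ0 : (0 : ℝ) < (κ : ℝ) := by exact_mod_cast hpos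
            field_simp
  calc ∑ κ ∈ K, ∑ ι ∈ I, ∑ sa ∈ X κ ι, w sa / max 1 ((n sa : ℝ) - 1)
      ≤ ∑ κ ∈ K, ∑ _ι ∈ I, 2 / m :=
        Finset.sum_le_sum fun κ hκ => Finset.sum_le_sum (key κ hκ)
    _ = K.card * (I.card * (2 / m)) := by
        simp [Finset.sum_const, nsmul_eq_mul, mul_assoc]
    _ = 2 * (K.card * I.card) / m := by ring
end

section
/- Let (X_{κ,ι}) be a family of finite sets of state-action pairs with |X_{κ,ι}| ≤ κ, let w : S×A → ℝ≥0 with ∑_{κ,ι} ∑_{(s,a)∈X_{κ,ι}} w(s,a) ≤ H, let n(s,a) ≥ max(2, m·w(s,a)·κ) for (s,a) ∈ X_{κ,ι}, and m > 0. Then ∑_{κ,ι} ∑_{(s,a)∈X_{κ,ι}} w(s,a)/(max(1, n(s,a)−1))^{3/4} ≤ 2·|K×I|^{3/4}·H^{1/4}/m^{3/4}. -/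
open Finset Real

/-- Hölder/power-mean: sum of fourth roots. -/
lemma sum_rpow_quarter_aux {α : Type*} (s : Finset α) (f : α → ℝ) (hf : ∀ i ∈ s, 0 ≤ f i) :
    ∑ i ∈ s, f i ^ ((1:ℝ)/4) ≤ (s.card : ℝ) ^ ((3:ℝ)/4) * (∑ i ∈ s, f i) ^ ((1:ℝ)/4) := by
  have hL : 0 ≤ ∑ i ∈ s, f i ^ ((1:ℝ)/4) :=
    Finset.sum_nonneg fun i hi => Real.rpow_nonneg (hf i hi) _
  have hS : 0 ≤ ∑ i ∈ s, f i := Finset.sum_nonneg hf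
  have hR : 0 ≤ (s.card : ℝ) ^ ((3:ℝ)/4) * (∑ i ∈ s, f i) ^ ((1:ℝ)/4) :=
    mul_nonneg (Real.rpow_nonneg (by positivity) _) (Real.rpow_nonneg hS _)
  rw [← Real.rpow_le_rpow_iff hL hR (z := 4) (by norm_num)]
  have h1 := Real.rpow_sum_le_const_mul_sum_rpow_of_nonneg s (f := fun i => f i ^ ((1:ℝ)/4))
    (p := 4) (by norm_num) (fun i hi => Real.rpow_nonneg (hf i hi) _)
  have h2 : ∑ i ∈ s, (f i ^ ((1:ℝ)/4)) ^ (4:ℝ) = ∑ i ∈ s, f i := by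
    refine Finset.sum_congr rfl fun i hi => ?_
    rw [← Real.rpow_mul (hf i hi)]; norm_num
  calc (∑ i ∈ s, f i ^ ((1:ℝ)/4)) ^ (4:ℝ)
      ≤ (s.card : ℝ) ^ ((4:ℝ) - 1) * ∑ i ∈ s, (f i ^ ((1:ℝ)/4)) ^ (4:ℝ) := h1
    _ = ((s.card : ℝ) ^ ((3:ℝ)/4) * (∑ i ∈ s, f i) ^ ((1:ℝ)/4)) ^ (4:ℝ) := by
        rw [h2, Real.mul_rpow (Real.rpow_nonneg (by positivity) _) (Real.rpow_nonneg hS _),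
          ← Real.rpow_mul (by positivity), ← Real.rpow_mul hS]
        norm_num

theorem knownness_counting_34 {S A : Type*} [DecidableEq S] [DecidableEq A]
    (K I : Finset ℕ) (X : ℕ → ℕ → Finset (S × A))
    (w : S × A → ℝ) (n : S × A → ℕ) (m H : ℝ) (hm : 0 < m)
    (hw : ∀ sa, 0 ≤ w sa)
    (hwsum : ∑ κ ∈ K, ∑ ι ∈ I, ∑ sa ∈ X κ ι, w sa ≤ H)
    (hcount : ∀ κ ∈ K, ∀ ι ∈ I, ∀ sa ∈ X κ ι, max 2 (m * w sa * κ) ≤ (n sa : ℝ))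
    (hcard : ∀ κ ∈ K, ∀ ι ∈ I, (X κ ι).card ≤ κ) :
    ∑ κ ∈ K, ∑ ι ∈ I, ∑ sa ∈ X κ ι, w sa / (max 1 ((n sa : ℝ) - 1)) ^ ((3 : ℝ) / 4)
      ≤ 2 * ((K.card * I.card : ℝ)) ^ ((3 : ℝ) / 4) * H ^ ((1 : ℝ) / 4) / m ^ ((3 : ℝ) / 4) := by
  -- abbreviate inner weights
  set W : ℕ → ℕ → ℝ := fun κ ι => ∑ sa ∈ X κ ι, w sa with hW
  have hWnn : ∀ κ ι, 0 ≤ W κ ι := fun κ ι => Finset.sum_nonneg fun sa _ => hw sa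
  -- Step 1 : inner bound
  have step1 : ∀ κ ∈ K, ∀ ι ∈ I,
      ∑ sa ∈ X κ ι, w sa / (max 1 ((n sa : ℝ) - 1)) ^ ((3 : ℝ) / 4)
        ≤ (2 / m) ^ ((3:ℝ)/4) * (W κ ι) ^ ((1:ℝ)/4) := by
    intro κ hκ ι hι
    rcases Nat.eq_zero_or_pos κ with rfl | hκpos
    · have : X 0 ι = ∅ := Finset.card_eq_zero.mp (Nat.le_zero.mp (hcard 0 hκ ι hι))
      simp only [this, Finset.sum_empty]
      exact mul_nonneg (Real.rpow_nonneg (by positivity) _) (Real.rpow_nonneg (hWnn 0 ι) _)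
    · have hκR : (0:ℝ) < κ := by exact_mod_cast hκpos
      -- termwise bound
      have term : ∀ sa ∈ X κ ι,
          w sa / (max 1 ((n sa : ℝ) - 1)) ^ ((3 : ℝ) / 4)
            ≤ (2 / (m * κ)) ^ ((3:ℝ)/4) * (w sa) ^ ((1:ℝ)/4) := by
        intro sa hsa
        have hn := hcount κ hκ ι hι sa hsa
        have hn2 : (2:ℝ) ≤ n sa := le_trans (le_max_left _ _) hn
        have hnw : m * w sa * κ ≤ n sa := le_trans (le_max_right _ _) hn
        set t : ℝ := max 1 ((n sa : ℝ) - 1) with ht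
        have ht1 : (1:ℝ) ≤ t := le_max_left _ _
        have ht0 : (0:ℝ) < t := lt_of_lt_of_le one_pos ht1
        have htw : m * w sa * κ / 2 ≤ t := by
          have : m * w sa * κ / 2 ≤ (n sa : ℝ) - 1 := by linarith
          exact le_trans this (le_max_right _ _)
        have htp : (0:ℝ) < t ^ ((3:ℝ)/4) := Real.rpow_pos_of_pos ht0 _
        rcases eq_or_lt_of_le (hw sa) with h0 | hwpos
        · rw [← h0]; simp
        · rcases le_or_gt (m * w sa * κ / 2) 1 with hc | hc
          · -- small case: w ≤ 2/(mκ)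
            have hws : w sa ≤ 2 / (m * κ) := by
              rw [le_div_iff₀ (by positivity)]
              rw [div_le_one (by norm_num)] at hc
              nlinarith
            have ht34 : (1:ℝ) ≤ t ^ ((3:ℝ)/4) := by
              calc (1:ℝ) = 1 ^ ((3:ℝ)/4) := (Real.one_rpow _).symm
                _ ≤ t ^ ((3:ℝ)/4) := Real.rpow_le_rpow zero_le_one ht1 (by norm_num)
            calc w sa / t ^ ((3:ℝ)/4) ≤ w sa := by
                  rw [div_le_iff₀ htp]; nlinarith
              _ = (w sa) ^ ((3:ℝ)/4) * (w sa) ^ ((1:ℝ)/4) := by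
                  rw [← Real.rpow_add hwpos]; norm_num
              _ ≤ (2 / (m * κ)) ^ ((3:ℝ)/4) * (w sa) ^ ((1:ℝ)/4) := by
                  apply mul_le_mul_of_nonneg_right _ (Real.rpow_nonneg (hw sa) _)
                  exact Real.rpow_le_rpow (hw sa) hws (by norm_num)
          · -- large case: t ≥ m w κ / 2 ≥ 1
            have hq : (0:ℝ) < m * w sa * κ / 2 := lt_trans one_pos hc
            have h34 : (m * w sa * κ / 2) ^ ((3:ℝ)/4) ≤ t ^ ((3:ℝ)/4) :=
              Real.rpow_le_rpow (le_of_lt hq) htw (by norm_num)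
            calc w sa / t ^ ((3:ℝ)/4)
                ≤ w sa / (m * w sa * κ / 2) ^ ((3:ℝ)/4) := by
                  apply div_le_div_of_nonneg_left (hw sa) (Real.rpow_pos_of_pos hq _) h34
              _ = (2 / (m * κ)) ^ ((3:ℝ)/4) * (w sa) ^ ((1:ℝ)/4) := by
                  have hc0 : (0:ℝ) < 2 / (m * κ) := by positivity
                  have heq : m * w sa * κ / 2 = w sa / (2 / (m * κ)) := by
                    field_simp
                  have hw34 : (0:ℝ) < w sa ^ ((3:ℝ)/4) := Real.rpow_pos_of_pos hwpos _
                  have hc34 : (0:ℝ) < (2 / (m * κ)) ^ ((3:ℝ)/4) :=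
                    Real.rpow_pos_of_pos hc0 _
                  rw [heq, Real.div_rpow (hw sa) (le_of_lt hc0)]
                  rw [div_div_eq_mul_div, div_eq_iff (ne_of_gt hw34)]
                  rw [mul_assoc, mul_comm ((w sa) ^ ((1:ℝ)/4)), ← Real.rpow_add hwpos]
                  norm_num
                  ring
      calc ∑ sa ∈ X κ ι, w sa / (max 1 ((n sa : ℝ) - 1)) ^ ((3 : ℝ) / 4)
          ≤ ∑ sa ∈ X κ ι, (2 / (m * κ)) ^ ((3:ℝ)/4) * (w sa) ^ ((1:ℝ)/4) :=
            Finset.sum_le_sum term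
        _ = (2 / (m * κ)) ^ ((3:ℝ)/4) * ∑ sa ∈ X κ ι, (w sa) ^ ((1:ℝ)/4) := by
            rw [Finset.mul_sum]
        _ ≤ (2 / (m * κ)) ^ ((3:ℝ)/4) * (((X κ ι).card : ℝ) ^ ((3:ℝ)/4) * (W κ ι) ^ ((1:ℝ)/4)) := by
            apply mul_le_mul_of_nonneg_left (sum_rpow_quarter_aux _ _ fun sa _ => hw sa)
            positivity
        _ ≤ (2 / (m * κ)) ^ ((3:ℝ)/4) * ((κ : ℝ) ^ ((3:ℝ)/4) * (W κ ι) ^ ((1:ℝ)/4)) := by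
            apply mul_le_mul_of_nonneg_left _ (by positivity)
            apply mul_le_mul_of_nonneg_right _ (Real.rpow_nonneg (hWnn κ ι) _)
            apply Real.rpow_le_rpow (by positivity) (by exact_mod_cast hcard κ hκ ι hι)
              (by norm_num)
        _ = (2 / m) ^ ((3:ℝ)/4) * (W κ ι) ^ ((1:ℝ)/4) := by
            rw [← mul_assoc, ← Real.mul_rpow (by positivity) (le_of_lt hκR)]
            congr 2
            field_simp
  -- Step 2 : outer Hölder
  have hsum2 : ∑ κ ∈ K, ∑ ι ∈ I, (W κ ι) ^ ((1:ℝ)/4)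
      ≤ ((K.card * I.card : ℝ)) ^ ((3:ℝ)/4) * H ^ ((1:ℝ)/4) := by
    have hH0 : 0 ≤ H :=
      le_trans (Finset.sum_nonneg fun κ _ => Finset.sum_nonneg fun ι _ => hWnn κ ι) hwsum
    have := sum_rpow_quarter_aux (K ×ˢ I) (fun p => W p.1 p.2)
      (fun p _ => hWnn p.1 p.2)
    simp only [Finset.sum_product] at this
    calc ∑ κ ∈ K, ∑ ι ∈ I, (W κ ι) ^ ((1:ℝ)/4)
        ≤ ((K ×ˢ I).card : ℝ) ^ ((3:ℝ)/4) * (∑ κ ∈ K, ∑ ι ∈ I, W κ ι) ^ ((1:ℝ)/4) := this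
      _ ≤ ((K.card * I.card : ℝ)) ^ ((3:ℝ)/4) * H ^ ((1:ℝ)/4) := by
          rw [Finset.card_product]
          push_cast
          apply mul_le_mul_of_nonneg_left _ (by positivity)
          exact Real.rpow_le_rpow (Finset.sum_nonneg fun κ _ => Finset.sum_nonneg fun ι _ =>
            hWnn κ ι) hwsum (by norm_num)
  have h2m : (2 / m) ^ ((3:ℝ)/4) ≤ 2 / m ^ ((3:ℝ)/4) := by
    rw [Real.div_rpow (by norm_num) (le_of_lt hm), div_le_div_iff₀
      (Real.rpow_pos_of_pos hm _) (Real.rpow_pos_of_pos hm _)]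
    have : (2:ℝ) ^ ((3:ℝ)/4) ≤ 2 := by
      calc (2:ℝ) ^ ((3:ℝ)/4) ≤ 2 ^ (1:ℝ) :=
        Real.rpow_le_rpow_of_exponent_le (by norm_num) (by norm_num)
        _ = 2 := Real.rpow_one 2
    nlinarith [Real.rpow_pos_of_pos hm ((3:ℝ)/4)]
  calc ∑ κ ∈ K, ∑ ι ∈ I, ∑ sa ∈ X κ ι, w sa / (max 1 ((n sa : ℝ) - 1)) ^ ((3 : ℝ) / 4)
      ≤ ∑ κ ∈ K, ∑ ι ∈ I, (2 / m) ^ ((3:ℝ)/4) * (W κ ι) ^ ((1:ℝ)/4) :=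
        Finset.sum_le_sum fun κ hκ => Finset.sum_le_sum fun ι hι => step1 κ hκ ι hι
    _ = (2 / m) ^ ((3:ℝ)/4) * ∑ κ ∈ K, ∑ ι ∈ I, (W κ ι) ^ ((1:ℝ)/4) := by
        simp_rw [Finset.mul_sum]
    _ ≤ (2 / m) ^ ((3:ℝ)/4) * (((K.card * I.card : ℝ)) ^ ((3:ℝ)/4) * H ^ ((1:ℝ)/4)) := by
        apply mul_le_mul_of_nonneg_left hsum2 (by positivity)
    _ ≤ (2 / m ^ ((3:ℝ)/4)) * (((K.card * I.card : ℝ)) ^ ((3:ℝ)/4) * H ^ ((1:ℝ)/4)) := by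
        apply mul_le_mul_of_nonneg_right h2m
        have hH0 : 0 ≤ H :=
          le_trans (Finset.sum_nonneg fun κ _ => Finset.sum_nonneg fun ι _ => hWnn κ ι) hwsum
        positivity
    _ = 2 * ((K.card * I.card : ℝ)) ^ ((3:ℝ)/4) * H ^ ((1:ℝ)/4) / m ^ ((3:ℝ)/4) := by
        ring
end

section
/- Let Δ : D → ℝ≥0 be defined on D = {0, 2, 6, 14, …, γ} (where each next index is 2d+2) and suppose Δ_d ≤ Y_d + Z·√(Δ_{2d+2}) for all d ∈ D \ {γ}, with Y_d, Z ≥ 0. Then Δ₀ ≤ ∑_{d ∈ D \ {γ}} Z^{2d/(2+d)}·Y_d^{2/(2+d)} + Z^{2γ/(2+γ)}·Δ_γ^{2/(2+γ)}. -/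
/-!
Set `e_d = 2 / (2 + d)`. Raising `Δ_d ≤ Y_d + Z √Δ_{2d+2}` to the power `e_d ≤ 1` after multiplying
by `Z^d` and using subadditivity of `x ↦ x ^ e_d` gives
`(Z^d Δ_d)^{e_d} ≤ (Z^d Y_d)^{e_d} + (Z^{2d+2} Δ_{2d+2})^{e_d / 2}`, and `e_d / 2 = e_{2d+2}`.
So `u_d = (Z^d Δ_d)^{e_d}` satisfies `u_d ≤ (Z^d Y_d)^{e_d} + u_{2d+2}`, which telescopes.
-/

open Finset Real

theorem le_sum_range_add_of_le_add_succ {α : Type*} [AddCommGroup α] [PartialOrder α]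
    [IsOrderedAddMonoid α] {u v : ℕ → α} {N : ℕ} (h : ∀ k < N, u k ≤ v k + u (k + 1)) :
    u 0 ≤ ∑ k ∈ range N, v k + u N := by
  have hsum : u 0 - u N ≤ ∑ k ∈ range N, v k := by
    rw [← sum_range_sub']
    exact sum_le_sum fun k hk => sub_le_iff_le_add.2 (h k (mem_range.1 hk))
  exact sub_le_iff_le_add.1 hsum

theorem pow_mul_rpow_of_nonneg (t : ℕ) {z x : ℝ} (hz : 0 ≤ z) (hx : 0 ≤ x) (p : ℝ) :
    (z ^ t * x) ^ p = z ^ (t * p) * x ^ p := by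
  rw [mul_rpow (pow_nonneg hz t) hx, rpow_mul hz, rpow_natCast]

theorem rpow_le_of_le_add_mul_sqrt (t : ℕ) {z a y b : ℝ} (hz : 0 ≤ z) (ha : 0 ≤ a)
    (hy : 0 ≤ y) (hb : 0 ≤ b) (h : a ≤ y + z * √b) :
    (z ^ t * a) ^ (2 / (2 + t : ℝ)) ≤
      (z ^ t * y) ^ (2 / (2 + t : ℝ)) + (z ^ (2 * t + 2) * b) ^ (2 / (2 + (2 * t + 2 : ℕ) : ℝ)) := by
  set e : ℝ := 2 / (2 + t)
  have he : 0 ≤ e := by positivity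
  have hsqrt : z ^ t * (z * √b) = √(z ^ (2 * t + 2) * b) := by
    rw [sqrt_mul (by positivity), show 2 * t + 2 = 2 * (t + 1) by ring, pow_mul',
      sqrt_sq (by positivity)]
    ring
  have hexp : e / 2 = 2 / (2 + (2 * t + 2 : ℕ) : ℝ) := by
    simp only [e]
    push_cast
    field_simp
    ring
  calc (z ^ t * a) ^ e ≤ (z ^ t * y + √(z ^ (2 * t + 2) * b)) ^ e := by
        gcongr
        rw [← hsqrt, ← mul_add]
        gcongr
    _ ≤ (z ^ t * y) ^ e + √(z ^ (2 * t + 2) * b) ^ e :=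
        rpow_add_le_add_rpow (by positivity) (sqrt_nonneg _) he (by
          rw [div_le_one (by positivity)]; linarith [(Nat.cast_nonneg t : (0 : ℝ) ≤ t)])
    _ = _ := by rw [← rpow_div_two_eq_sqrt _ (by positivity), hexp]

theorem recursion_unrolling (d : ℕ → ℕ) (hd0 : d 0 = 0) (hd : ∀ k, d (k + 1) = 2 * d k + 2)
    (N : ℕ) (γ : ℕ) (hγ : γ = d N)
    (Δ Y : ℕ → ℝ) (Z : ℝ) (hZ : 0 ≤ Z)
    (hΔ : ∀ k ≤ N, 0 ≤ Δ (d k)) (hY : ∀ k < N, 0 ≤ Y (d k))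
    (hrec : ∀ k < N, Δ (d k) ≤ Y (d k) + Z * Real.sqrt (Δ (d (k + 1)))) :
    Δ 0 ≤ (∑ k ∈ Finset.range N,
        Z ^ ((2 * d k : ℝ) / (2 + d k)) * Y (d k) ^ ((2 : ℝ) / (2 + d k)))
      + Z ^ ((2 * γ : ℝ) / (2 + γ)) * Δ γ ^ ((2 : ℝ) / (2 + γ)) := by
  subst hγ
  have hexp (t : ℕ) : (t : ℝ) * (2 / (2 + t)) = 2 * t / (2 + t) := by ring
  have hstep : ∀ k < N, (Z ^ d k * Δ (d k)) ^ (2 / (2 + d k : ℝ)) ≤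
      (Z ^ d k * Y (d k)) ^ (2 / (2 + d k : ℝ)) +
        (Z ^ d (k + 1) * Δ (d (k + 1))) ^ (2 / (2 + d (k + 1) : ℝ)) := fun k hk => by
    simpa only [hd k] using rpow_le_of_le_add_mul_sqrt (d k) hZ (hΔ k hk.le) (hY k hk)
      (hΔ (k + 1) hk) (hrec k hk)
  have hunroll := le_sum_range_add_of_le_add_succ hstep
  have hΔ0 : (Z ^ d 0 * Δ (d 0)) ^ (2 / (2 + d 0 : ℝ)) = Δ 0 := by simp [hd0]
  rw [hΔ0, pow_mul_rpow_of_nonneg _ hZ (hΔ N le_rfl), hexp] at hunroll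
  refine hunroll.trans_eq (congrArg (· + _) (sum_congr rfl fun k hk => ?_))
  rw [pow_mul_rpow_of_nonneg _ hZ (hY k (mem_range.1 hk)), hexp]
end
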